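/- arXiv:2212.11178 — 6 statements merged into one kernel-verified Lean document; each statement's English description precedes it below -/
import Mathlib

section
/- Let a, b, c, r, s, t be integers with t even, gcd(s,t)=1, gcd(r,t)=1, gcd(s,abc)=1, and s² = r³ + (b−a−c)r²t² + abc·t⁶. Then r and s are both odd, and gcd(2s, r³ + (b−a−c)r²t²) divides a power of abc·t⁶ coprime to s; in particular any common divisor d of s + t³√(abc) and s − t³√(abc) in the ring of integers of K = Q(√(abc), √(r+(b−a−c)t²)) is a unit, i.e. the ideals (s + t³√(abc)) and (s − t³√(abc)) are coprime in O_K. -/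
open NumberField

/-- In the biquadratic field `K = ℚ(√(abc), √(r+(b−a−c)t²))` attached to a point
`(r/t², s/t³)` on `y² = (x−a)(x+b)(x−c)` (with `t` even and the stated gcd conditions),
`r` and `s` are odd and the ideals generated by `α = s + t³√(abc)` and its conjugate
`ᾱ = s − t³√(abc)` are coprime in `𝓞_K`. -/
theorem stmt1 (a b c r s t : ℤ) (K : Type*) [Field K] [NumberField K]
    (u v : 𝓞 K) (hu : u ^ 2 = ((a * b * c : ℤ) : 𝓞 K))
    (hv : v ^ 2 = ((r + (b - a - c) * t ^ 2 : ℤ) : 𝓞 K))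
    (hgen : Algebra.adjoin ℚ {(u : K), (v : K)} = ⊤)
    (ht : Even t) (hrt : Int.gcd r t = 1) (hst : Int.gcd s t = 1)
    (hsabc : Int.gcd s (a * b * c) = 1)
    (hcurve : s ^ 2 = r ^ 3 + (b - a - c) * r ^ 2 * t ^ 2 + a * b * c * t ^ 6) :
    Odd r ∧ Odd s ∧
      IsCoprime (Ideal.span {((s : 𝓞 K) + (t : 𝓞 K) ^ 3 * u)})
        (Ideal.span {((s : 𝓞 K) - (t : 𝓞 K) ^ 3 * u)}) := by
  obtain ⟨k, hk⟩ := ht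
  have hrodd : Odd r := by
    rw [Int.odd_iff]
    rcases Int.emod_two_eq r with h | h
    · exfalso
      have h2 : (2 : ℤ) ∣ r := Int.dvd_of_emod_eq_zero h
      have h2t : (2 : ℤ) ∣ t := ⟨k, by omega⟩
      have := Int.dvd_gcd h2 h2t
      rw [hrt] at this
      norm_num at this
    · exact h
  have hsodd : Odd s := by
    rw [Int.odd_iff]
    rcases Int.emod_two_eq s with h | h
    · exfalso
      have h2 : (2 : ℤ) ∣ s := Int.dvd_of_emod_eq_zero h
      have h2t : (2 : ℤ) ∣ t := ⟨k, by omega⟩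
      have := Int.dvd_gcd h2 h2t
      rw [hst] at this
      norm_num at this
    · exact h
  refine ⟨hrodd, hsodd, ?_⟩
  -- integer coprimality of 2s and N = s² − abct⁶
  set N : ℤ := s ^ 2 - a * b * c * t ^ 6 with hN
  have hNodd : Odd N := by
    obtain ⟨m, hm⟩ := hsodd
    refine ⟨2 * m ^ 2 + 2 * m - a * b * c * 32 * k ^ 6, by rw [hN, hm, hk]; ring⟩
  have h2N : IsCoprime (2 : ℤ) N := by
    obtain ⟨m, hm⟩ := hNodd
    exact ⟨-m, 1, by omega⟩
  have hsN : IsCoprime s N := by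
    have h1 : IsCoprime s (a * b * c) := Int.isCoprime_iff_gcd_eq_one.mpr hsabc
    have h2 : IsCoprime s t := Int.isCoprime_iff_gcd_eq_one.mpr hst
    have h3 : IsCoprime s (a * b * c * t ^ 6) := h1.mul_right (IsCoprime.pow_right (n := 6) h2)
    have h4 : IsCoprime s (-(a * b * c * t ^ 6) + s * s) :=
      (h3.neg_right).add_mul_left_right s
    have : N = -(a * b * c * t ^ 6) + s * s := by rw [hN]; ring
    rwa [this]
  have h2sN : IsCoprime (2 * s) N := h2N.mul_left hsN
  obtain ⟨x, y, hxy⟩ := h2sN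
  rw [Ideal.isCoprime_span_singleton_iff]
  set α : 𝓞 K := (s : 𝓞 K) + (t : 𝓞 K) ^ 3 * u with hα
  set β : 𝓞 K := (s : 𝓞 K) - (t : 𝓞 K) ^ 3 * u with hβ
  have hαβ : α * β = ((N : ℤ) : 𝓞 K) := by
    have : α * β = (s : 𝓞 K) ^ 2 - (t : 𝓞 K) ^ 6 * u ^ 2 := by rw [hα, hβ]; ring
    rw [this, hu, hN]
    push_cast
    ring
  refine ⟨(x : 𝓞 K) + (y : 𝓞 K) * β, (x : 𝓞 K), ?_⟩
  have hcast : (x : 𝓞 K) * (2 * (s : 𝓞 K)) + (y : 𝓞 K) * ((N : ℤ) : 𝓞 K) = 1 := by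
    have := congrArg (fun z : ℤ => (z : 𝓞 K)) hxy
    push_cast at this
    exact this
  calc ((x : 𝓞 K) + (y : 𝓞 K) * β) * α + (x : 𝓞 K) * β
      = (x : 𝓞 K) * (2 * (s : 𝓞 K)) + (y : 𝓞 K) * (α * β) := by rw [hα, hβ]; ring
    _ = 1 := by rw [hαβ]; exact hcast
end

section
/- Under the hypotheses that t is even, gcd(s, abc) = 1, gcd(r,t) = gcd(s,t) = 1, and s² = r³ + (b−a−c)r²t² + abc·t⁶, the principal ideal (s + t³√(abc))·O_K in the ring of integers of K = Q(√(abc), √(r+(b−a−c)t²)) is the square of an ideal of O_K. -/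
/-!
Put `τ = t³√(abc)`, so that `α = s + τ` and its conjugate `s - τ` multiply to
`s² - t⁶abc`, which the curve equation identifies with `(r·√(r + (b-a-c)t²))²`.
The two factors are coprime: the ideal they generate contains `2s²` and `2τ²`, hence `2`
(as `s²` and `t⁶abc` are coprime), and it contains their product `s² - t⁶abc`, which is odd
because `s` is odd and `t` even. In the Dedekind domain `𝓞 K`, coprime principal ideals
whose product is a square are squares.
-/

open NumberField

theorem isCoprime_add_sub_of_isCoprime_sq {R : Type*} [CommRing R] {x y : R}
    (hsq : IsCoprime (x ^ 2) (y ^ 2)) (h2 : IsCoprime 2 (x ^ 2 - y ^ 2)) :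
    IsCoprime (x + y) (x - y) := by
  obtain ⟨p, q, hpq⟩ := hsq
  obtain ⟨m, n, hmn⟩ := h2
  exact ⟨m * (p * x + q * y) + n * (x - y), m * (p * x - q * y), by
    linear_combination hmn + 2 * m * hpq⟩

theorem Ideal.exists_span_singleton_eq_pow_of_mul_eq_pow {R : Type*} [CommRing R]
    [IsDedekindDomain R] {x y z : R} (hxy : IsCoprime x y) {k : ℕ} (h : x * y = z ^ k) :
    ∃ I : Ideal R, Ideal.span {x} = I ^ k := by
  have hgcd : IsUnit (gcd (Ideal.span {x}) (Ideal.span {y})) := by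
    rw [Ideal.gcd_eq_sup, Ideal.isCoprime_iff_sup_eq.mp
      ((Ideal.isCoprime_span_singleton_iff x y).mpr hxy), ← Ideal.one_eq_top]
    exact isUnit_one
  exact exists_eq_pow_of_mul_eq_pow hgcd
    (by rw [Ideal.span_singleton_mul_span_singleton, h, Ideal.span_singleton_pow])

theorem Int.odd_of_isCoprime_of_even {s t : ℤ} (hst : IsCoprime s t) (ht : Even t) : Odd s := by
  obtain ⟨k, rfl⟩ := ht.two_dvd
  exact Int.isCoprime_two_right.mp hst.of_mul_right_left

theorem stmt3_general (a b c r s t : ℤ) (K : Type*) [Field K] [NumberField K]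
    (u v : 𝓞 K) (hu : u ^ 2 = ((a * b * c : ℤ) : 𝓞 K))
    (hv : v ^ 2 = ((r + (b - a - c) * t ^ 2 : ℤ) : 𝓞 K))
    (ht : Even t) (hst : Int.gcd s t = 1)
    (hsabc : Int.gcd s (a * b * c) = 1)
    (hcurve : s ^ 2 = r ^ 3 + (b - a - c) * r ^ 2 * t ^ 2 + a * b * c * t ^ 6) :
    ∃ I : Ideal (𝓞 K), Ideal.span {((s : 𝓞 K) + (t : 𝓞 K) ^ 3 * u)} = I ^ 2 := by
  rw [← Int.isCoprime_iff_gcd_eq_one] at hst hsabc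
  set τ : 𝓞 K := (t : 𝓞 K) ^ 3 * u with hτ_def
  have hτ : τ ^ 2 = ((t ^ 6 * (a * b * c) : ℤ) : 𝓞 K) := by
    rw [hτ_def, Int.cast_mul, ← hu]; push_cast; ring
  have hsq : IsCoprime ((s : 𝓞 K) ^ 2) (τ ^ 2) := by
    rw [hτ]
    exact_mod_cast ((hst.pow_right (n := 6)).mul_right hsabc).pow_left.intCast
  have h2 : IsCoprime (2 : 𝓞 K) ((s : 𝓞 K) ^ 2 - τ ^ 2) := by
    have hodd : Odd (s ^ 2 - t ^ 6 * (a * b * c)) :=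
      (Int.odd_of_isCoprime_of_even hst ht).pow.sub_even
        ((ht.pow_of_ne_zero (by norm_num)).mul_right _)
    rw [hτ]
    exact_mod_cast (Int.isCoprime_two_left.mpr hodd).intCast
  have hprod : ((s : 𝓞 K) + τ) * ((s : 𝓞 K) - τ) = ((r : 𝓞 K) * v) ^ 2 := by
    have hcurve' := congrArg (Int.cast : ℤ → 𝓞 K) hcurve
    push_cast at hu hv hcurve'
    linear_combination hcurve' - (t : 𝓞 K) ^ 6 * hu - (r : 𝓞 K) ^ 2 * hv
  exact Ideal.exists_span_singleton_eq_pow_of_mul_eq_pow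
    (isCoprime_add_sub_of_isCoprime_sq hsq h2) hprod

/-- Under the hypotheses that `t` is even, `gcd(s,abc) = 1`, `gcd(r,t) = gcd(s,t) = 1` and
`s² = r³ + (b−a−c)r²t² + abc·t⁶`, the principal ideal generated by `α = s + t³√(abc)` in
the ring of integers of `K = ℚ(√(abc), √(r+(b−a−c)t²))` is the square of an ideal. -/
theorem stmt3 (a b c r s t : ℤ) (K : Type*) [Field K] [NumberField K]
    (u v : 𝓞 K) (hu : u ^ 2 = ((a * b * c : ℤ) : 𝓞 K))
    (hv : v ^ 2 = ((r + (b - a - c) * t ^ 2 : ℤ) : 𝓞 K))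
    (hgen : Algebra.adjoin ℚ {(u : K), (v : K)} = ⊤)
    (ht : Even t) (hrt : Int.gcd r t = 1) (hst : Int.gcd s t = 1)
    (hsabc : Int.gcd s (a * b * c) = 1)
    (hcurve : s ^ 2 = r ^ 3 + (b - a - c) * r ^ 2 * t ^ 2 + a * b * c * t ^ 6) :
    ∃ I : Ideal (𝓞 K), Ideal.span {((s : 𝓞 K) + (t : 𝓞 K) ^ 3 * u)} = I ^ 2 :=
  stmt3_general a b c r s t K u v hu hv ht hst hsabc hcurve
end

section
/- Let l ≠ 5 be an odd prime, p a prime, and b₁, b₂ squarefree integers whose only prime divisors lie in {2,3,5,p}xxx (elements of Q(S,2)). Suppose (z₁,z₂,z₃) ∈ Q_l × Q_l × Q_l satisfies b₁z₁² − b₂z₂² = 15p and b₁z₁² − b₁b₂z₃² = 24p, with z₁,z₂ nonzero. If v_l(z_i) < 0 for some i ∈ {1,2,3}, then v_l(z₁) = v_l(z₂) = v_l(z₃) = −k for some positive integer k. -/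
/-!
Write `A = b₁z₁²`, `B = b₂z₂²`, `C = b₁b₂z₃²`, so that `A - B = 15p` and `A - C = 24p` are
integral, and `v(bᵢ) ∈ {0, 1}` by squarefreeness. If `v(z₁) < 0`, then `A` is not integral, so
the ultrametric inequality gives `v(B) = v(C) = v(A)`, and comparing
`v(b₁) + 2v(z₁) = v(b₂) + 2v(z₂) = v(b₁) + v(b₂) + 2v(z₃)` modulo `2` forces
`v(z₁) = v(z₂) = v(z₃)`. If `v(z₁) ≥ 0`, then `B` and `C` are integral too. This forces
`v(z₂) ≥ 0`, and `v(z₃) < 0` is only possible when `v(b₁) = v(b₂) = 1` and `v(C) = 0 < v(A)`. But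
then `v(24p) = v(A - C) = 0`, although `l ∣ b₁` puts `l` in `{3, p}`, so `l ∣ 24p`.
-/

namespace Padic

variable {p : ℕ} [Fact p.Prime]

lemma valuation_neg (x : ℚ_[p]) : (-x).valuation = x.valuation := by
  have h := valuation_pow (-x) 2
  rw [neg_sq, valuation_pow] at h
  push_cast at h
  omega

lemma ne_zero_of_valuation_ne_zero {x : ℚ_[p]} (h : x.valuation ≠ 0) : x ≠ 0 := by
  rintro rfl
  exact h valuation_zero

lemma valuation_add_eq_of_lt {x y : ℚ_[p]} (hx : x ≠ 0) (h : x.valuation < y.valuation) :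
    (x + y).valuation = x.valuation := by
  have hxy : x + y ≠ 0 := by
    intro h0
    rw [eq_neg_of_add_eq_zero_right h0, valuation_neg] at h
    exact h.false
  have hge : x.valuation ≤ (x + y).valuation := by
    simpa [min_eq_left h.le] using le_valuation_add hxy
  have hle : min (x + y).valuation (-y).valuation ≤ x.valuation := by
    simpa using le_valuation_add (x := x + y) (y := -y) (by simpa using hx)
  rw [valuation_neg] at hle
  omega

lemma valuation_eq_of_sub_eq_of_valuation_neg {x y c : ℚ_[p]} (h : x - y = c)
    (hc : 0 ≤ c.valuation) (hx : x.valuation < 0) : y.valuation = x.valuation := by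
  rw [show y = x + -c by rw [← h]; ring,
    valuation_add_eq_of_lt (ne_zero_of_valuation_ne_zero hx.ne) (by rw [valuation_neg]; omega)]

lemma valuation_nonneg_of_sub_eq {x y c : ℚ_[p]} (h : x - y = c) (hc : 0 ≤ c.valuation)
    (hx : 0 ≤ x.valuation) : 0 ≤ y.valuation := by
  by_contra! hy
  have := valuation_eq_of_sub_eq_of_valuation_neg (x := y) (y := x) (c := -c)
    (by rw [← h]; ring) (by rwa [valuation_neg]) hy
  omega

lemma valuation_intCast_mul_sq {b : ℤ} (hb : b ≠ 0) {z : ℚ_[p]} (hz : z ≠ 0) :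
    ((b : ℚ_[p]) * z ^ 2).valuation = padicValInt p b + 2 * z.valuation := by
  rw [valuation_mul (by exact_mod_cast hb) (pow_ne_zero 2 hz), valuation_intCast, valuation_pow]
  push_cast
  ring

lemma valuation_intCast_mul_intCast_mul_sq {b₁ b₂ : ℤ} (hb₁ : b₁ ≠ 0) (hb₂ : b₂ ≠ 0)
    {z : ℚ_[p]} (hz : z ≠ 0) :
    ((b₁ : ℚ_[p]) * b₂ * z ^ 2).valuation =
      padicValInt p b₁ + padicValInt p b₂ + 2 * z.valuation := by
  rw [← Int.cast_mul, valuation_intCast_mul_sq (mul_ne_zero hb₁ hb₂) hz, padicValInt.mul hb₁ hb₂]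
  push_cast
  ring

lemma valuation_intCast_mul_sq_nonneg (b : ℤ) {z : ℚ_[p]} (hz : 0 ≤ z.valuation) :
    0 ≤ ((b : ℚ_[p]) * z ^ 2).valuation := by
  rw [← norm_le_one_iff_val_nonneg] at hz ⊢
  rw [norm_mul, norm_pow]
  exact mul_le_one₀ (norm_int_le_one b) (by positivity) (pow_le_one₀ (norm_nonneg z) hz)

end Padic

lemma padicValInt_le_one_of_squarefree {p : ℕ} [hp : Fact p.Prime] {b : ℤ} (hb : Squarefree b) :
    padicValInt p b ≤ 1 := by
  by_contra! h
  have hdvd : (p : ℤ) * p ∣ b := by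
    rw [← sq, padicValInt_dvd_iff]
    exact .inr h
  exact (Nat.prime_iff_prime_int.mp hp.out).not_isUnit (hb _ hdvd)

lemma dvd_twentyFour_mul_of_mem {l p : ℕ} (hl : l ∈ ({2, 3, 5, p} : Set ℕ)) (hlodd : Odd l)
    (hl5 : l ≠ 5) : l ∣ 24 * p := by
  simp only [Set.mem_insert_iff, Set.mem_singleton_iff] at hl
  rcases hl with rfl | rfl | rfl | rfl
  · exact absurd hlodd (by decide)
  · exact Dvd.dvd.mul_right (by norm_num) p
  · exact absurd rfl hl5
  · exact dvd_mul_left l 24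

section HomogeneousSpace

open Padic

variable {l : ℕ} [Fact l.Prime] {b₁ b₂ : ℤ} {z₁ z₂ z₃ c₁ c₂ : ℚ_[l]}

theorem valuation_eq_of_valuation_neg (hb₁ : b₁ ≠ 0) (hb₂ : b₂ ≠ 0)
    (hv₁ : padicValInt l b₁ ≤ 1) (hv₂ : padicValInt l b₂ ≤ 1)
    (e₁ : (b₁ : ℚ_[l]) * z₁ ^ 2 - (b₂ : ℚ_[l]) * z₂ ^ 2 = c₁)
    (e₂ : (b₁ : ℚ_[l]) * z₁ ^ 2 - (b₁ : ℚ_[l]) * (b₂ : ℚ_[l]) * z₃ ^ 2 = c₂)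
    (hc₁ : 0 ≤ c₁.valuation) (hc₂ : 0 ≤ c₂.valuation) (hz₁ : z₁.valuation < 0) :
    z₂.valuation = z₁.valuation ∧ z₃.valuation = z₁.valuation := by
  have hA := valuation_intCast_mul_sq hb₁ (ne_zero_of_valuation_ne_zero hz₁.ne)
  have hA_neg : ((b₁ : ℚ_[l]) * z₁ ^ 2).valuation < 0 := by omega
  have hB := valuation_eq_of_sub_eq_of_valuation_neg e₁ hc₁ hA_neg
  have hC := valuation_eq_of_sub_eq_of_valuation_neg e₂ hc₂ hA_neg
  have hz₂ : z₂ ≠ 0 := by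
    rintro rfl
    rw [zero_pow two_ne_zero, mul_zero, valuation_zero] at hB
    omega
  have hz₃ : z₃ ≠ 0 := by
    rintro rfl
    rw [zero_pow two_ne_zero, mul_zero, valuation_zero] at hC
    omega
  rw [valuation_intCast_mul_sq hb₂ hz₂] at hB
  rw [valuation_intCast_mul_intCast_mul_sq hb₁ hb₂ hz₃] at hC
  omega

theorem valuation_nonneg_of_sub_intCast_mul_sq (hb₂ : b₂ ≠ 0) (hv₂ : padicValInt l b₂ ≤ 1)
    (e₁ : (b₁ : ℚ_[l]) * z₁ ^ 2 - (b₂ : ℚ_[l]) * z₂ ^ 2 = c₁)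
    (hc₁ : 0 ≤ c₁.valuation) (hz₁ : 0 ≤ z₁.valuation) : 0 ≤ z₂.valuation := by
  by_contra! hz₂
  have hB := valuation_nonneg_of_sub_eq e₁ hc₁ (valuation_intCast_mul_sq_nonneg b₁ hz₁)
  rw [valuation_intCast_mul_sq hb₂ (ne_zero_of_valuation_ne_zero hz₂.ne)] at hB
  omega

theorem valuation_nonneg_of_sub_intCast_mul_intCast_mul_sq (hb₁ : b₁ ≠ 0) (hb₂ : b₂ ≠ 0)
    (hv₁ : padicValInt l b₁ ≤ 1) (hv₂ : padicValInt l b₂ ≤ 1)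
    (e₂ : (b₁ : ℚ_[l]) * z₁ ^ 2 - (b₁ : ℚ_[l]) * (b₂ : ℚ_[l]) * z₃ ^ 2 = c₂)
    (hc₂ : 0 ≤ c₂.valuation) (hc₂_pos : (l : ℤ) ∣ b₁ → 0 < c₂.valuation)
    (hz₁ : z₁ ≠ 0) (hz₁_nonneg : 0 ≤ z₁.valuation) : 0 ≤ z₃.valuation := by
  by_contra! hz₃
  have hC_nonneg :=
    valuation_nonneg_of_sub_eq e₂ hc₂ (valuation_intCast_mul_sq_nonneg b₁ hz₁_nonneg)
  have hz₃_ne := ne_zero_of_valuation_ne_zero hz₃.ne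
  have hC := valuation_intCast_mul_intCast_mul_sq hb₁ hb₂ hz₃_ne
  have hA := valuation_intCast_mul_sq hb₁ hz₁
  have hC_zero : ((b₁ : ℚ_[l]) * b₂ * z₃ ^ 2).valuation = 0 := by omega
  have hdvd : (l : ℤ) ∣ b₁ := by
    rw [← pow_one (l : ℤ), padicValInt_dvd_iff]
    exact .inr (by omega)
  have hc₂_zero : c₂.valuation = 0 := by
    rw [← e₂, sub_eq_neg_add, valuation_add_eq_of_lt (by simp [hb₁, hb₂, hz₃_ne])
      (by rw [valuation_neg]; omega), valuation_neg, hC_zero]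
  exact (hc₂_pos hdvd).ne' hc₂_zero

end HomogeneousSpace

theorem stmt5_general (l p : ℕ) [Fact l.Prime] (hlodd : Odd l) (hl5 : l ≠ 5) (hp : p.Prime)
    (b₁ b₂ : ℤ) (hb₁sf : Squarefree b₁) (hb₂sf : Squarefree b₂)
    (hb₁S : ∀ q : ℕ, q.Prime → (q : ℤ) ∣ b₁ → q ∈ ({2, 3, 5, p} : Set ℕ))
    (z₁ z₂ z₃ : ℚ_[l]) (hz₁ : z₁ ≠ 0)
    (e₁ : (b₁ : ℚ_[l]) * z₁ ^ 2 - (b₂ : ℚ_[l]) * z₂ ^ 2 = 15 * p)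
    (e₂ : (b₁ : ℚ_[l]) * z₁ ^ 2 - (b₁ : ℚ_[l]) * (b₂ : ℚ_[l]) * z₃ ^ 2 = 24 * p)
    (hneg : z₁.valuation < 0 ∨ z₂.valuation < 0 ∨ z₃.valuation < 0) :
    ∃ k : ℤ, 0 < k ∧ z₁.valuation = -k ∧ z₂.valuation = -k ∧ z₃.valuation = -k := by
  have hv₁ := padicValInt_le_one_of_squarefree (p := l) hb₁sf
  have hv₂ := padicValInt_le_one_of_squarefree (p := l) hb₂sf
  have hval (n m : ℕ) [n.AtLeastTwo] :
      ((OfNat.ofNat n : ℚ_[l]) * m).valuation = padicValNat l (n * m) := by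
    rw [← Padic.valuation_natCast]
    push_cast
    rfl
  have h15 : 0 ≤ ((15 : ℚ_[l]) * p).valuation := by rw [hval]; positivity
  have h24 : 0 ≤ ((24 : ℚ_[l]) * p).valuation := by rw [hval]; positivity
  rcases lt_or_ge z₁.valuation 0 with hz₁_neg | hz₁_nonneg
  · obtain ⟨h₂, h₃⟩ := valuation_eq_of_valuation_neg hb₁sf.ne_zero hb₂sf.ne_zero hv₁ hv₂
      e₁ e₂ h15 h24 hz₁_neg
    exact ⟨-z₁.valuation, by omega, by omega, by omega, by omega⟩
  · have h24_pos : (l : ℤ) ∣ b₁ → 0 < ((24 : ℚ_[l]) * p).valuation := fun hdvd => by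
      rw [hval]
      exact_mod_cast one_le_padicValNat_of_dvd (by positivity [hp.pos])
        (dvd_twentyFour_mul_of_mem (hb₁S l Fact.out hdvd) hlodd hl5)
    have h₂ := valuation_nonneg_of_sub_intCast_mul_sq hb₂sf.ne_zero hv₂ e₁ h15 hz₁_nonneg
    have h₃ := valuation_nonneg_of_sub_intCast_mul_intCast_mul_sq hb₁sf.ne_zero hb₂sf.ne_zero
      hv₁ hv₂ e₂ h24 h24_pos hz₁ hz₁_nonneg
    omega

/-- Valuation lemma: for an odd prime `l ≠ 5`, squarefree `b₁, b₂` supported on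
`{2,3,5,p}`, if `(z₁,z₂,z₃)` solves the homogeneous-space equations and some `z_i` has
negative `l`-adic valuation, then all three valuations are equal to some `−k < 0`. -/
theorem stmt5 (l p : ℕ) [Fact l.Prime] (hlodd : Odd l) (hl5 : l ≠ 5) (hp : p.Prime)
    (b₁ b₂ : ℤ) (hb₁sf : Squarefree b₁) (hb₂sf : Squarefree b₂)
    (hb₁S : ∀ q : ℕ, q.Prime → (q : ℤ) ∣ b₁ → q ∈ ({2, 3, 5, p} : Set ℕ))
    (hb₂S : ∀ q : ℕ, q.Prime → (q : ℤ) ∣ b₂ → q ∈ ({2, 3, 5, p} : Set ℕ))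
    (z₁ z₂ z₃ : ℚ_[l]) (hz₁ : z₁ ≠ 0) (hz₂ : z₂ ≠ 0)
    (e₁ : (b₁ : ℚ_[l]) * z₁ ^ 2 - (b₂ : ℚ_[l]) * z₂ ^ 2 = 15 * p)
    (e₂ : (b₁ : ℚ_[l]) * z₁ ^ 2 - (b₁ : ℚ_[l]) * (b₂ : ℚ_[l]) * z₃ ^ 2 = 24 * p)
    (hneg : z₁.valuation < 0 ∨ z₂.valuation < 0 ∨ z₃.valuation < 0) :
    ∃ k : ℤ, 0 < k ∧ z₁.valuation = -k ∧ z₂.valuation = -k ∧ z₃.valuation = -k :=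
  stmt5_general l p hlodd hl5 hp b₁ b₂ hb₁sf hb₂sf hb₁S z₁ z₂ z₃ hz₁ e₁ e₂ hneg
end

section
/- Let p be a prime with p ≡ 5 (mod 8) and p ≡ 2 (mod 3) (e.g. p ≡ 53, 77 mod 120). Then the system 3z₁² − p z₂² = 15p, 3z₁² − 3p z₃² = 24p has no solution in Q_p³: any p-adic solution would force z₁ ≡ 0 (mod p) and then z₃² ≡ −8 (mod p), contradicting that −8 is a quadratic non-residue mod p. -/
/-- For a prime `p ≡ 5 (mod 8)` with `p ≡ 2 (mod 3)` (e.g. `p ≡ 53, 77 (mod 120)`), the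
system `3z₁² − pz₂² = 15p`, `3z₁² − 3pz₃² = 24p` has no solution in `ℚ_p³`. -/
theorem stmt13 (p : ℕ) [Fact p.Prime] (h8 : p % 8 = 5) (h3 : p % 3 = 2) :
    ¬ ∃ z₁ z₂ z₃ : ℚ_[p],
      3 * z₁ ^ 2 - (p : ℚ_[p]) * z₂ ^ 2 = 15 * p ∧
      3 * z₁ ^ 2 - 3 * (p : ℚ_[p]) * z₃ ^ 2 = 24 * p := by
  rintro ⟨z₁, z₂, z₃, _h1, h2⟩
  have hp : p.Prime := Fact.out
  have hp5 : 5 ≤ p := by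
    rcases hp.two_le.lt_or_eq with h | h
    · omega
    · omega
  have hp0 : (0:ℝ) < p := by positivity
  have hp1 : (1:ℝ) < p := by exact_mod_cast hp.one_lt
  have hpne : (p : ℚ_[p]) ≠ 0 := Nat.cast_ne_zero.mpr hp.pos.ne'
  have hE : z₁ ^ 2 = (p : ℚ_[p]) * (z₃ ^ 2 + 8) := by linear_combination h2 / 3
  have h8norm : ‖(8 : ℚ_[p])‖ ≤ 1 := by
    have := Padic.norm_int_le_one (p := p) 8
    simpa using this
  -- main claim: ‖z₃‖ ≤ 1
  have hz₃le : ‖z₃‖ ≤ 1 := by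
    by_contra hgt
    push_neg at hgt
    have hz₃0 : z₃ ≠ 0 := by
      intro h; rw [h] at hgt; simp at hgt; linarith
    have hsq : ‖z₃ ^ 2‖ = ‖z₃‖ ^ 2 := by rw [norm_pow]
    have hsq1 : (1:ℝ) < ‖z₃ ^ 2‖ := by
      rw [hsq]; nlinarith
    have hne : ‖z₃ ^ 2‖ ≠ ‖(8:ℚ_[p])‖ := by linarith
    have hmax : ‖z₃ ^ 2 + 8‖ = ‖z₃ ^ 2‖ := by
      rw [Padic.add_eq_max_of_ne hne, max_eq_left (by linarith)]
    have hz₁0 : z₁ ≠ 0 := by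
      intro h
      rw [h] at hE
      have : ‖(0:ℚ_[p]) ^ 2‖ = ‖(p : ℚ_[p])‖ * ‖z₃ ^ 2 + 8‖ := by rw [hE, norm_mul]
      rw [hmax] at this
      simp at this
      rcases this with h' | h'
      · exact hpne (by exact_mod_cast h')
      · rw [h'] at hsq1; simp at hsq1; linarith
    -- take valuations via norms
    have hnorm : ‖z₁‖ ^ 2 = ‖(p : ℚ_[p])‖ * ‖z₃‖ ^ 2 := by
      have := congrArg norm hE
      rwa [norm_pow, norm_mul, hmax, hsq] at this
    rw [Padic.norm_eq_zpow_neg_valuation hz₁0, Padic.norm_eq_zpow_neg_valuation hz₃0, Padic.norm_p] at hnorm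
    have hv : (p:ℝ) ^ (-z₁.valuation + -z₁.valuation) =
        (p:ℝ) ^ (-1 + (-z₃.valuation + -z₃.valuation)) := by
      rw [zpow_add₀ (ne_of_gt hp0), zpow_add₀ (ne_of_gt hp0), zpow_add₀ (ne_of_gt hp0),
        zpow_neg_one, ← pow_two, ← pow_two]
      exact hnorm
    have := zpow_right_injective₀ hp0 (ne_of_gt hp1) hv
    omega
  have hkey : ‖z₃ ^ 2 + 8‖ < 1 := by
    by_cases hz₁0 : z₁ = 0
    · rw [hz₁0] at hE
      have : z₃ ^ 2 + 8 = 0 := by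
        rcases mul_eq_zero.mp hE.symm with h | h
        · exact absurd h hpne
        · exact h
      rw [this]; simp
    · have hnorm : ‖z₁‖ ^ 2 = (p:ℝ)⁻¹ * ‖z₃ ^ 2 + 8‖ := by
        have := congrArg norm hE
        rwa [norm_pow, norm_mul, Padic.norm_p] at this
      have hle1 : ‖z₃ ^ 2 + 8‖ ≤ 1 := by
        refine le_trans (Padic.nonarchimedean _ _) (max_le ?_ h8norm)
        rw [norm_pow]
        exact pow_le_one₀ (norm_nonneg _) hz₃le
      have hz₁lt : ‖z₁‖ < 1 := by
        by_contra hge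
        push_neg at hge
        have hpi : (p:ℝ)⁻¹ < 1 := inv_lt_one_of_one_lt₀ hp1
        have hpi0 : (0:ℝ) < (p:ℝ)⁻¹ := by positivity
        nlinarith
      have hz₁le : ‖z₁‖ ≤ (p:ℝ)⁻¹ := by
        have := (Padic.norm_le_pow_iff_norm_lt_pow_add_one z₁ (-1)).mpr (by simpa using hz₁lt)
        simpa [zpow_neg_one] using this
      have : ‖z₃ ^ 2 + 8‖ = p * ‖z₁‖ ^ 2 := by
        field_simp at hnorm ⊢
        linarith
      rw [this]
      have h1 : ‖z₁‖ ^ 2 ≤ ((p:ℝ)⁻¹) ^ 2 := by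
        exact pow_le_pow_left₀ (norm_nonneg _) hz₁le 2
      have : (p:ℝ) * ‖z₁‖ ^ 2 ≤ (p:ℝ)⁻¹ := by
        rw [show ((p:ℝ)⁻¹) ^ 2 = (p:ℝ)⁻¹ * (p:ℝ)⁻¹ by ring] at h1
        calc (p:ℝ) * ‖z₁‖ ^ 2 ≤ (p:ℝ) * ((p:ℝ)⁻¹ * (p:ℝ)⁻¹) := by nlinarith
          _ = (p:ℝ)⁻¹ := by field_simp
      calc (p:ℝ) * ‖z₁‖ ^ 2 ≤ (p:ℝ)⁻¹ := this
        _ < 1 := inv_lt_one_of_one_lt₀ hp1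
  -- lift z₃ to ℤ_[p]
  set w : ℤ_[p] := ⟨z₃, hz₃le⟩ with hw
  have hu : ‖(w ^ 2 + 8 : ℤ_[p])‖ < 1 := by
    have : ((w ^ 2 + 8 : ℤ_[p]) : ℚ_[p]) = z₃ ^ 2 + 8 := by push_cast [hw]; rfl
    rw [PadicInt.norm_def, this]
    exact hkey
  have hmem : (w ^ 2 + 8 : ℤ_[p]) ∈ IsLocalRing.maximalIdeal ℤ_[p] := by
    rw [PadicInt.maximalIdeal_eq_span_p, Ideal.mem_span_singleton]
    exact (PadicInt.norm_lt_one_iff_dvd _).mp hu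
  have hker : PadicInt.toZMod (w ^ 2 + 8) = 0 := by
    rw [← RingHom.mem_ker, PadicInt.ker_toZMod]
    exact hmem
  set t : ZMod p := PadicInt.toZMod w with ht
  have ht8 : t ^ 2 = -8 := by
    have : t ^ 2 + 8 = 0 := by
      rw [ht, ← map_pow]
      have : (PadicInt.toZMod (w ^ 2) : ZMod p) + 8 = PadicInt.toZMod (w ^ 2 + 8) := by
        rw [map_add]
        congr 1
        exact (map_ofNat _ 8).symm
      rw [this, hker]
    linear_combination this
  have h2ne : (2 : ZMod p) ≠ 0 := by
    have : ((2:ℕ) : ZMod p) ≠ 0 := by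
      rw [Ne, ZMod.natCast_eq_zero_iff]
      intro hdvd
      have := Nat.le_of_dvd (by norm_num) hdvd
      omega
    exact_mod_cast this
  have hsq : IsSquare (-2 : ZMod p) := by
    have h4 : (2 : ZMod p) * 2⁻¹ = 1 := mul_inv_cancel₀ h2ne
    have hc : (t * 2⁻¹) * (t * 2⁻¹) = -2 := by
      calc (t * 2⁻¹) * (t * 2⁻¹) = t ^ 2 * (2⁻¹ * 2⁻¹) := by ring
        _ = -2 * ((2:ZMod p) * 2⁻¹) * (2 * 2⁻¹) := by rw [ht8]; ring
        _ = -2 := by rw [h4]; ring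
    exact ⟨t * 2⁻¹, hc.symm⟩
  have := (ZMod.exists_sq_eq_neg_two_iff (p := p) (by omega)).mp hsq
  omega
end

section
/- Let p be a prime with p ≡ 2 (mod 3). Then the system 3z₁² − (−p)z₂² = 15p, 3z₁² − 3(−p)z₃² = 24p has no solution in Q₃³: subtracting the equations gives −3p z₃² + p z₂² = −9p, i.e. z₂² = 3z₃² − 9, which forces 3 | z₂ and then (z₂/3)² ≡ −1 (mod 3), a contradiction. -/
instance : Fact (Nat.Prime 3) := ⟨by norm_num⟩

/-!
Since `-1` is not a square modulo `3`, the form `x² + y²` has no cancellation in `ℚ₃`: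
`‖x² + y²‖ = max ‖x‖² ‖y‖²`, an even power of `3`, whereas `‖3z²‖` is an odd one. Hence
`x² + y² = 3z²` has only the trivial solution in `ℚ₃`. Subtracting the two equations of the
system and dividing by `p` gives `z₂² + 3² = 3z₃²`, a nontrivial solution.
-/

section SumOfTwoSquares

variable {p : ℕ} [Fact p.Prime]

theorem PadicInt.isUnit_one_add_sq (hp : p % 4 = 3) (t : ℤ_[p]) : IsUnit (1 + t ^ 2) := by
  by_contra hunit
  have hker : 1 + t ^ 2 ∈ RingHom.ker (PadicInt.toZMod : ℤ_[p] →+* ZMod p) := by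
    rw [PadicInt.ker_toZMod]
    exact hunit
  rw [RingHom.mem_ker, map_add, map_one, map_pow] at hker
  refine (ZMod.exists_sq_eq_neg_one_iff (p := p)).mp ⟨PadicInt.toZMod t, ?_⟩ hp
  linear_combination -hker

theorem Padic.norm_sq_add_sq_of_norm_le (hp : p % 4 = 3) {x y : ℚ_[p]} (hyx : ‖y‖ ≤ ‖x‖) :
    ‖x ^ 2 + y ^ 2‖ = ‖x‖ ^ 2 := by
  rcases eq_or_ne x 0 with rfl | hx
  · simp_all
  have ht : ‖y / x‖ ≤ 1 := by
    rw [norm_div]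
    exact div_le_one_of_le₀ hyx (norm_nonneg x)
  have hunit : ‖1 + (y / x) ^ 2‖ = 1 :=
    PadicInt.isUnit_iff.mp (PadicInt.isUnit_one_add_sq hp ⟨y / x, ht⟩)
  calc ‖x ^ 2 + y ^ 2‖ = ‖x ^ 2 * (1 + (y / x) ^ 2)‖ := by congr 1; field_simp
    _ = ‖x‖ ^ 2 := by rw [norm_mul, hunit, norm_pow, mul_one]

theorem Padic.norm_sq_add_sq (hp : p % 4 = 3) (x y : ℚ_[p]) :
    ‖x ^ 2 + y ^ 2‖ = max ‖x‖ ‖y‖ ^ 2 := by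
  rcases le_total ‖y‖ ‖x‖ with hyx | hxy
  · rw [max_eq_left hyx, Padic.norm_sq_add_sq_of_norm_le hp hyx]
  · rw [max_eq_right hxy, add_comm, Padic.norm_sq_add_sq_of_norm_le hp hxy]

theorem Padic.norm_sq_ne_inv_prime (u : ℚ_[p]) : ‖u‖ ^ 2 ≠ (p : ℝ)⁻¹ := by
  intro h
  have hu : u ≠ 0 := by
    rintro rfl
    simp only [norm_zero, ne_eq, OfNat.ofNat_ne_zero, not_false_eq_true, zero_pow] at h
    exact (Fact.out : p.Prime).ne_zero (by exact_mod_cast (inv_eq_zero.mp h.symm))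
  rw [Padic.norm_eq_zpow_neg_valuation hu, ← zpow_natCast, ← zpow_mul, ← zpow_neg_one] at h
  have := zpow_right_injective₀ (by exact_mod_cast (Fact.out : p.Prime).pos : (0 : ℝ) < p)
    (by exact_mod_cast (Fact.out : p.Prime).ne_one) h
  omega

theorem Padic.eq_zero_of_sq_add_sq_eq_prime_mul_sq (hp : p % 4 = 3) {x y z : ℚ_[p]}
    (h : x ^ 2 + y ^ 2 = p * z ^ 2) : x = 0 ∧ y = 0 := by
  have hnorm := congrArg norm h
  rw [Padic.norm_sq_add_sq hp, norm_mul, Padic.norm_p, norm_pow] at hnorm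
  rcases eq_or_ne z 0 with rfl | hz
  · have hmax : max ‖x‖ ‖y‖ = 0 := by simpa using hnorm
    exact ⟨norm_le_zero_iff.mp (hmax ▸ le_max_left _ _),
      norm_le_zero_iff.mp (hmax ▸ le_max_right _ _)⟩
  · exfalso
    obtain ⟨w, hw⟩ : ∃ w, max ‖x‖ ‖y‖ = ‖w‖ := by
      rcases max_choice ‖x‖ ‖y‖ with h | h <;> exact ⟨_, h⟩
    apply Padic.norm_sq_ne_inv_prime (w / z)
    have hz' : ‖z‖ ≠ 0 := norm_ne_zero_iff.mpr hz
    rw [norm_div, div_pow, ← hw, hnorm]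
    field_simp

end SumOfTwoSquares

theorem stmt14_general (p : ℕ) (hp : p.Prime) :
    ¬ ∃ z₁ z₂ z₃ : ℚ_[3],
      3 * z₁ ^ 2 + (p : ℚ_[3]) * z₂ ^ 2 = 15 * p ∧
      3 * z₁ ^ 2 + 3 * (p : ℚ_[3]) * z₃ ^ 2 = 24 * p := by
  rintro ⟨z₁, z₂, z₃, h₁, h₂⟩
  have hp0 : (p : ℚ_[3]) ≠ 0 := Nat.cast_ne_zero.mpr hp.ne_zero
  have hform : z₂ ^ 2 + 3 ^ 2 = ((3 : ℕ) : ℚ_[3]) * z₃ ^ 2 := by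
    refine mul_left_cancel₀ hp0 ?_
    push_cast
    linear_combination h₁ - h₂
  have h3 : (3 : ℚ_[3]) = 0 := (Padic.eq_zero_of_sq_add_sq_eq_prime_mul_sq (by norm_num) hform).2
  norm_num at h3

/-- For a prime `p ≡ 2 (mod 3)`, the system corresponding to `(b₁,b₂) = (3,−p)`,
namely `3z₁² + pz₂² = 15p`, `3z₁² + 3pz₃² = 24p`, has no solution in `ℚ₃³`. -/
theorem stmt14 (p : ℕ) (hp : p.Prime) (h3 : p % 3 = 2) :
    ¬ ∃ z₁ z₂ z₃ : ℚ_[3],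
      3 * z₁ ^ 2 + (p : ℚ_[3]) * z₂ ^ 2 = 15 * p ∧
      3 * z₁ ^ 2 + 3 * (p : ℚ_[3]) * z₃ ^ 2 = 24 * p :=
  stmt14_general p hp
end

section
/- Let p be a prime, P = (r₀/t₀², s₀/t₀³) a rational point in lowest terms on E_p: y² = x³ − 21p x² + 972p³ (equivalently y² = (x+6p)(x−9p)(x−18p)) with t₀ even. Write 2P = (r₁/t₁², s₁/t₁³) in lowest terms. Then t₁ is even. Moreover, if gcd(s₀, 3p) = 1 then gcd(s₁, 3p) = 1. -/
/-!
Clearing denominators in the duplication formula gives `r₁ · 4s₀²t₀² = N · t₁²` with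
`N = r₀⁴ − 8·972p³·r₀t₀⁶ + 4·21p·972p³·t₀⁸ ≡ r₀⁴ (mod 6p)`, while the curve equation gives
`s² ≡ r³ (mod 3p)`. If `t₀` is even then `r₀` is odd, hence so is `N`, and the factor `2` on the
left must divide `t₁`. A prime `q` dividing both `s₁` and `3p` divides `r₁`, hence not `t₁`,
hence `N`, hence `r₀`, hence `s₀`.
-/

theorem Prime.dvd_iff_of_dvd_pow_sub_pow {R : Type*} [CommRing R] {q a b : R}
    {m n : ℕ} (hq : Prime q) (hm : m ≠ 0) (hn : n ≠ 0) (h : q ∣ a ^ m - b ^ n) :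
    q ∣ a ↔ q ∣ b := by
  refine (hq.dvd_pow_iff_dvd hm).symm.trans (Iff.trans ?_ (hq.dvd_pow_iff_dvd hn))
  exact ⟨fun ha => (dvd_sub_right ha).1 h, fun hb => (dvd_sub_left hb).1 h⟩

theorem Prime.not_dvd_of_dvd_of_gcd_eq_one {a b q : ℤ} (hq : Prime q) (h : Int.gcd a b = 1)
    (ha : q ∣ a) : ¬q ∣ b := fun hb =>
  hq.not_isUnit ((Int.isCoprime_iff_gcd_eq_one.2 h).isUnit_of_dvd' ha hb)

namespace Ep

/-- The curve `y² = x³ − 21px² + 972p³` at the point `(r/t², s/t³)`, with denominators cleared. -/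
def OnCurve (p r s t : ℤ) : Prop :=
  s ^ 2 = r ^ 3 - 21 * p * r ^ 2 * t ^ 2 + 972 * p ^ 3 * t ^ 6

/-- The numerator of `x(2P)` for `P = (r/t², s/t³)`; its denominator is `4s²t²`. -/
def doubleNum (p r t : ℤ) : ℤ :=
  r ^ 4 - 8 * (972 * p ^ 3) * r * t ^ 6 + 4 * (21 * p) * (972 * p ^ 3) * t ^ 8

theorem OnCurve.dvd_sq_sub_cube {p r s t : ℤ} (h : OnCurve p r s t) : 3 * p ∣ s ^ 2 - r ^ 3 :=
  ⟨-7 * r ^ 2 * t ^ 2 + 324 * p ^ 2 * t ^ 6, by rw [h]; ring⟩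

theorem OnCurve.prime_dvd_iff {p r s t q : ℤ} (h : OnCurve p r s t) (hq : Prime q)
    (hqp : q ∣ 3 * p) : q ∣ s ↔ q ∣ r :=
  hq.dvd_iff_of_dvd_pow_sub_pow two_ne_zero three_ne_zero (hqp.trans h.dvd_sq_sub_cube)

theorem dvd_doubleNum_sub (p r t : ℤ) : 6 * p ∣ doubleNum p r t - r ^ 4 :=
  ⟨-1296 * p ^ 2 * r * t ^ 6 + 13608 * p ^ 3 * t ^ 8, by unfold doubleNum; ring⟩

theorem prime_dvd_doubleNum_iff {p r t q : ℤ} (hq : Prime q) (hqp : q ∣ 6 * p) :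
    q ∣ doubleNum p r t ↔ q ∣ r :=
  hq.dvd_iff_of_dvd_pow_sub_pow (m := 1) one_ne_zero four_ne_zero
    (by simpa using hqp.trans (dvd_doubleNum_sub p r t))

end Ep

open Ep

theorem stmt16_general (p : ℕ) (hp : p.Prime) (r₀ s₀ t₀ r₁ s₁ t₁ : ℤ)
    (ht₀ : t₀ ≠ 0) (ht₁ : t₁ ≠ 0) (hs₀ : s₀ ≠ 0)
    (hrt₀ : Int.gcd r₀ t₀ = 1)
    (hrt₁ : Int.gcd r₁ t₁ = 1)
    (hP₀ : s₀ ^ 2 = r₀ ^ 3 - 21 * p * r₀ ^ 2 * t₀ ^ 2 + 972 * p ^ 3 * t₀ ^ 6)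
    (hP₁ : s₁ ^ 2 = r₁ ^ 3 - 21 * p * r₁ ^ 2 * t₁ ^ 2 + 972 * p ^ 3 * t₁ ^ 6)
    (hx : (r₁ : ℚ) / (t₁ : ℚ) ^ 2 =
      ((r₀ : ℚ) ^ 4 - 8 * (972 * (p : ℚ) ^ 3) * r₀ * (t₀ : ℚ) ^ 6 +
        4 * (21 * (p : ℚ)) * (972 * (p : ℚ) ^ 3) * (t₀ : ℚ) ^ 8) /
        (4 * (s₀ : ℚ) ^ 2 * (t₀ : ℚ) ^ 2))
    (heven : Even t₀) :
    Even t₁ ∧ (Int.gcd s₀ (3 * p) = 1 → Int.gcd s₁ (3 * p) = 1) := by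
  have hclear : r₁ * (4 * s₀ ^ 2 * t₀ ^ 2) = doubleNum p r₀ t₀ * t₁ ^ 2 := by
    rw [div_eq_div_iff (by positivity) (by positivity)] at hx
    unfold doubleNum
    exact_mod_cast hx
  have hN : ¬2 ∣ doubleNum p r₀ t₀ := by
    rw [prime_dvd_doubleNum_iff Int.prime_two ⟨3 * p, by ring⟩]
    exact Int.prime_two.not_dvd_of_dvd_of_gcd_eq_one (Int.gcd_comm _ _ ▸ hrt₀) heven.two_dvd
  refine ⟨even_iff_two_dvd.2 ?_, fun hcop => ?_⟩
  · have h2 : 2 ∣ doubleNum p r₀ t₀ * t₁ ^ 2 := hclear ▸ ⟨r₁ * 2 * s₀ ^ 2 * t₀ ^ 2, by ring⟩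
    exact Int.prime_two.dvd_of_dvd_pow ((Int.prime_two.dvd_mul.1 h2).resolve_left hN)
  rw [← Int.isCoprime_iff_gcd_eq_one]
  refine isCoprime_of_prime_dvd (by simp [hp.ne_zero]) fun q hq hqs₁ hq3p => ?_
  have hq6p : q ∣ 6 * p := hq3p.trans ⟨2, by ring⟩
  have hqr₁ : q ∣ r₁ := (OnCurve.prime_dvd_iff hP₁ hq hq3p).1 hqs₁
  have hqN : q ∣ doubleNum p r₀ t₀ :=
    ((hq.dvd_mul.1 (hclear ▸ dvd_mul_of_dvd_left hqr₁ _)).resolve_right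
      fun h => hq.not_dvd_of_dvd_of_gcd_eq_one hrt₁ hqr₁ (hq.dvd_of_dvd_pow h))
  have hqs₀ : q ∣ s₀ :=
    (OnCurve.prime_dvd_iff hP₀ hq hq3p).2 ((prime_dvd_doubleNum_iff hq hq6p).1 hqN)
  exact hq.not_dvd_of_dvd_of_gcd_eq_one hcop hqs₀ hq3p

/-- Let `P = (r₀/t₀², s₀/t₀³)` be a rational point in lowest terms on
`E_p : y² = x³ − 21px² + 972p³` with `t₀` even, and let `2P = (r₁/t₁², s₁/t₁³)` in lowest
terms, where by the duplication formula
`x(2P) = (r₀⁴ − 8·972p³·r₀t₀⁶ + 4·21p·972p³·t₀⁸)/(4s₀²t₀²)`.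
Then `t₁` is even, and if `gcd(s₀, 3p) = 1` then `gcd(s₁, 3p) = 1`. -/
theorem stmt16 (p : ℕ) (hp : p.Prime) (r₀ s₀ t₀ r₁ s₁ t₁ : ℤ)
    (ht₀ : t₀ ≠ 0) (ht₁ : t₁ ≠ 0) (hs₀ : s₀ ≠ 0)
    (hrt₀ : Int.gcd r₀ t₀ = 1) (hst₀ : Int.gcd s₀ t₀ = 1)
    (hrt₁ : Int.gcd r₁ t₁ = 1) (hst₁ : Int.gcd s₁ t₁ = 1)
    (hP₀ : s₀ ^ 2 = r₀ ^ 3 - 21 * p * r₀ ^ 2 * t₀ ^ 2 + 972 * p ^ 3 * t₀ ^ 6)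
    (hP₁ : s₁ ^ 2 = r₁ ^ 3 - 21 * p * r₁ ^ 2 * t₁ ^ 2 + 972 * p ^ 3 * t₁ ^ 6)
    (hx : (r₁ : ℚ) / (t₁ : ℚ) ^ 2 =
      ((r₀ : ℚ) ^ 4 - 8 * (972 * (p : ℚ) ^ 3) * r₀ * (t₀ : ℚ) ^ 6 +
        4 * (21 * (p : ℚ)) * (972 * (p : ℚ) ^ 3) * (t₀ : ℚ) ^ 8) /
        (4 * (s₀ : ℚ) ^ 2 * (t₀ : ℚ) ^ 2))
    (heven : Even t₀) :
    Even t₁ ∧ (Int.gcd s₀ (3 * p) = 1 → Int.gcd s₁ (3 * p) = 1) :=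
  stmt16_general p hp r₀ s₀ t₀ r₁ s₁ t₁ ht₀ ht₁ hs₀ hrt₀ hrt₁ hP₀ hP₁ hx heven
end
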